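/- arXiv:1712.04332 — 2 statements merged into one kernel-verified Lean document; each statement's English description precedes it below -/
import Mathlib

section
/- For every i, E[(g^i)^2] = (τ^2/n)(σ^2 + e) + (τ^2 (E[(a^1)^4] − 1)/n^2) (x^i − ξ^i)^2, where e = (1/n) Σ_j (x^j − ξ^j)^2 is the mean squared error of the current iterate. -/
/-!
With `S = ∑ j, a j * (x j - ξ j)`, the square of the gradient is
`τ² n⁻¹ (a i)² (w - n^{-1/2} S)²`. Since `w` is independent of `a` and centred, the cross term
vanishes and `E[(a i)² w²] = σ²`. Splitting `S = a i * (x i - ξ i) + T`, the remainder `T` is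
independent of `a i`, centred, and has second moment `∑_{j ≠ i} (x j - ξ j)²`, so
`E[(a i)² S²] = E[(a i)⁴] (x i - ξ i)² + ∑_{j ≠ i} (x j - ξ j)²`.
-/

open MeasureTheory ProbabilityTheory

namespace ProbabilityTheory

variable {Ω ι : Type*} {mΩ : MeasurableSpace Ω} {μ : Measure Ω}

def HasFiniteMoments (f : Ω → ℝ) (μ : Measure Ω) : Prop := ∀ p : ℕ, MemLp f p μ

namespace HasFiniteMoments

variable {f g : Ω → ℝ}

lemma integrable (hf : HasFiniteMoments f μ) : Integrable f μ :=
  memLp_one_iff_integrable.mp (by exact_mod_cast hf 1)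

lemma aestronglyMeasurable (hf : HasFiniteMoments f μ) : AEStronglyMeasurable f μ :=
  hf.integrable.aestronglyMeasurable

lemma mul (hf : HasFiniteMoments f μ) (hg : HasFiniteMoments g μ) :
    HasFiniteMoments (fun ω ↦ f ω * g ω) μ := by
  intro p
  have : ENNReal.HolderTriple (2 * p) (2 * p) p :=
    ⟨by rw [← two_mul, ENNReal.mul_inv (by simp) (by simp), ← mul_assoc,
      ENNReal.mul_inv_cancel two_ne_zero ENNReal.ofNat_ne_top, one_mul]⟩
  exact (by exact_mod_cast hg (2 * p) : MemLp g (2 * p) μ).mul'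
    (by exact_mod_cast hf (2 * p) : MemLp f (2 * p) μ)

lemma pow [IsFiniteMeasure μ] (hf : HasFiniteMoments f μ) (k : ℕ) :
    HasFiniteMoments (fun ω ↦ f ω ^ k) μ := by
  induction k with
  | zero => exact fun p ↦ by simpa using memLp_const (1 : ℝ)
  | succ k ih => simpa only [pow_succ] using ih.mul hf

lemma const_mul (hf : HasFiniteMoments f μ) (c : ℝ) : HasFiniteMoments (fun ω ↦ c * f ω) μ :=
  fun p ↦ (hf p).const_mul c

lemma sum {s : Finset ι} {f : ι → Ω → ℝ} (hf : ∀ i ∈ s, HasFiniteMoments (f i) μ) :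
    HasFiniteMoments (fun ω ↦ ∑ i ∈ s, f i ω) μ :=
  fun p ↦ memLp_finsetSum s fun i hi ↦ hf i hi p

end HasFiniteMoments

lemma IdentDistrib.hasFiniteMoments {Ω' : Type*} [MeasurableSpace Ω'] {μ' : Measure Ω'}
    {f : Ω → ℝ} {g : Ω' → ℝ} (hfg : IdentDistrib f g μ μ') (hg : HasFiniteMoments g μ') :
    HasFiniteMoments f μ :=
  fun p ↦ hfg.memLp_iff.mpr (hg p)

theorem iIndepFun.indepFun_sum_const_mul_of_notMem {X : ι → Ω → ℝ} (hX : iIndepFun X μ)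
    (hX_meas : ∀ j, AEMeasurable (X j) μ) (c : ι → ℝ) {s : Finset ι} {i : ι} (hi : i ∉ s) :
    IndepFun (fun ω ↦ ∑ j ∈ s, c j * X j ω) (X i) μ := by
  classical
  -- every coordinate but the `i`-th is rescaled, so that `X i` itself stays in the family
  let φ : ι → ℝ → ℝ := fun j y ↦ if j = i then y else c j * y
  have hφ : ∀ j, Measurable (φ j) := fun j ↦ by
    by_cases hj : j = i <;> simp only [φ, hj, if_true, if_false] <;> fun_prop
  have h := (hX.comp φ hφ).indepFun_finsetSum_of_notMem₀
    (fun j ↦ (hφ j).comp_aemeasurable (hX_meas j)) hi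
  convert h using 1
  · ext ω
    rw [Finset.sum_apply]
    refine Finset.sum_congr rfl fun j hj ↦ ?_
    simp [φ, ne_of_mem_of_not_mem hj hi]
  · ext ω
    simp [φ]

theorem integral_sum_const_mul_eq_zero {X : ι → Ω → ℝ} {s : Finset ι}
    (hX_int : ∀ i ∈ s, Integrable (X i) μ) (hX_mean : ∀ i ∈ s, μ[X i] = 0) (c : ι → ℝ) :
    ∫ ω, ∑ j ∈ s, c j * X j ω ∂μ = 0 := by
  rw [integral_finsetSum s fun j hj ↦ (hX_int j hj).const_mul (c j)]
  exact Finset.sum_eq_zero fun j hj ↦ by rw [integral_const_mul, hX_mean j hj, mul_zero]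

theorem integral_sq_sum_const_mul_of_pairwise_indepFun [IsFiniteMeasure μ] {X : ι → Ω → ℝ}
    {s : Finset ι}
    (hX : Set.Pairwise s fun i j ↦ IndepFun (X i) (X j) μ) (hX_memLp : ∀ i ∈ s, MemLp (X i) 2 μ)
    (hX_mean : ∀ i ∈ s, μ[X i] = 0) (hX_sq : ∀ i ∈ s, ∫ ω, X i ω ^ 2 ∂μ = 1) (c : ι → ℝ) :
    ∫ ω, (∑ j ∈ s, c j * X j ω) ^ 2 ∂μ = ∑ j ∈ s, c j ^ 2 := by
  set Y : ι → Ω → ℝ := fun j ω ↦ c j * X j ω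
  have hY_memLp : ∀ j ∈ s, MemLp (Y j) 2 μ := fun j hj ↦ (hX_memLp j hj).const_mul (c j)
  have hY_var : ∀ j ∈ s, variance (Y j) μ = c j ^ 2 := fun j hj ↦ by
    rw [variance_const_mul, variance_of_integral_eq_zero (hX_memLp j hj).aemeasurable
      (hX_mean j hj), hX_sq j hj, mul_one]
  have hsum_mean : μ[∑ j ∈ s, Y j] = 0 := by
    simpa only [Finset.sum_apply] using integral_sum_const_mul_eq_zero
      (fun j hj ↦ (hX_memLp j hj).integrable one_le_two) hX_mean c
  have hvar := IndepFun.variance_sum hY_memLp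
    (hX.mono' fun i j hij ↦ hij.comp (measurable_const_mul (c i)) (measurable_const_mul (c j)))
  rw [variance_of_integral_eq_zero (Finset.aemeasurable_sum s fun j hj ↦
    (hY_memLp j hj).aemeasurable) hsum_mean, Finset.sum_congr rfl hY_var] at hvar
  simpa [Y, Finset.sum_apply] using hvar

theorem IndepFun.integral_sq_sub_mul [IsFiniteMeasure μ] {E : Type*} [MeasurableSpace E]
    {V : Ω → E} {w : Ω → ℝ} (hVw : IndepFun V w μ) {φ ψ : E → ℝ} (hφ : Measurable φ)
    (hψ : Measurable ψ) (hw : HasFiniteMoments w μ) (hφV : HasFiniteMoments (fun ω ↦ φ (V ω)) μ)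
    (hψV : HasFiniteMoments (fun ω ↦ ψ (V ω)) μ) (hw_mean : μ[w] = 0) :
    ∫ ω, (w ω - φ (V ω)) ^ 2 * ψ (V ω) ∂μ
      = (∫ ω, w ω ^ 2 ∂μ) * (∫ ω, ψ (V ω) ∂μ) + ∫ ω, φ (V ω) ^ 2 * ψ (V ω) ∂μ := by
  have h_sq : ∫ ω, w ω ^ 2 * ψ (V ω) ∂μ = (∫ ω, w ω ^ 2 ∂μ) * ∫ ω, ψ (V ω) ∂μ :=
    (hVw.comp hψ (measurable_id.pow_const 2)).symm.integral_fun_mul_eq_mul_integral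
      (hw.pow 2).aestronglyMeasurable hψV.aestronglyMeasurable
  have h_cross : ∫ ω, w ω * (φ (V ω) * ψ (V ω)) ∂μ = μ[w] * ∫ ω, φ (V ω) * ψ (V ω) ∂μ :=
    (hVw.comp (hφ.mul hψ) measurable_id).symm.integral_fun_mul_eq_mul_integral
      hw.aestronglyMeasurable (hφV.mul hψV).aestronglyMeasurable
  calc ∫ ω, (w ω - φ (V ω)) ^ 2 * ψ (V ω) ∂μ
      = ∫ ω, w ω ^ 2 * ψ (V ω) + -2 * (w ω * (φ (V ω) * ψ (V ω))) + φ (V ω) ^ 2 * ψ (V ω) ∂μ :=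
        integral_congr_ae (.of_forall fun ω ↦ by ring)
    _ = (∫ ω, w ω ^ 2 ∂μ) * (∫ ω, ψ (V ω) ∂μ) + ∫ ω, φ (V ω) ^ 2 * ψ (V ω) ∂μ := by
      have i_sq := ((hw.pow 2).mul hψV).integrable
      have i_cross := ((hw.mul (hφV.mul hψV)).const_mul (-2)).integrable
      rw [integral_add (i_sq.fun_add i_cross) ((hφV.pow 2).mul hψV).integrable,
        integral_add i_sq i_cross, integral_const_mul, h_sq, h_cross, hw_mean, zero_mul, mul_zero,
        add_zero]

theorem IndepFun.integral_sq_mul_add_mul_sq [IsFiniteMeasure μ] {X T : Ω → ℝ}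
    (hXT : IndepFun X T μ)
    (hX : HasFiniteMoments X μ) (hT : HasFiniteMoments T μ) (hT_mean : μ[T] = 0) (c : ℝ) :
    ∫ ω, (c * X ω + T ω) ^ 2 * X ω ^ 2 ∂μ
      = c ^ 2 * ∫ ω, X ω ^ 4 ∂μ + (∫ ω, X ω ^ 2 ∂μ) * ∫ ω, T ω ^ 2 ∂μ := by
  have h_cross : ∫ ω, X ω ^ 3 * T ω ∂μ = (∫ ω, X ω ^ 3 ∂μ) * μ[T] :=
    (hXT.comp (measurable_id.pow_const 3) measurable_id).integral_fun_mul_eq_mul_integral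
      (hX.pow 3).aestronglyMeasurable hT.aestronglyMeasurable
  have h_sq : ∫ ω, X ω ^ 2 * T ω ^ 2 ∂μ = (∫ ω, X ω ^ 2 ∂μ) * ∫ ω, T ω ^ 2 ∂μ :=
    (hXT.comp (measurable_id.pow_const 2) (measurable_id.pow_const 2))
      |>.integral_fun_mul_eq_mul_integral (hX.pow 2).aestronglyMeasurable
        (hT.pow 2).aestronglyMeasurable
  calc ∫ ω, (c * X ω + T ω) ^ 2 * X ω ^ 2 ∂μ
      = ∫ ω, c ^ 2 * X ω ^ 4 + 2 * c * (X ω ^ 3 * T ω) + X ω ^ 2 * T ω ^ 2 ∂μ :=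
        integral_congr_ae (.of_forall fun ω ↦ by ring)
    _ = _ := by
      have i_four := ((hX.pow 4).const_mul (c ^ 2)).integrable
      have i_cross := (((hX.pow 3).mul hT).const_mul (2 * c)).integrable
      rw [integral_add (i_four.fun_add i_cross) ((hX.pow 2).mul (hT.pow 2)).integrable,
        integral_add i_four i_cross, integral_const_mul, integral_const_mul, h_cross, h_sq,
        hT_mean, mul_zero, mul_zero, add_zero]

theorem iIndepFun.integral_sq_sum_const_mul_mul_sq [IsFiniteMeasure μ] [Fintype ι] {X : ι → Ω → ℝ}
    (hX : iIndepFun X μ) (hX_mom : ∀ j, HasFiniteMoments (X j) μ) (hX_mean : ∀ j, μ[X j] = 0)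
    (hX_sq : ∀ j, ∫ ω, X j ω ^ 2 ∂μ = 1) (c : ι → ℝ) (i : ι) :
    ∫ ω, (∑ j, c j * X j ω) ^ 2 * X i ω ^ 2 ∂μ
      = ∑ j, c j ^ 2 + (∫ ω, X i ω ^ 4 ∂μ - 1) * c i ^ 2 := by
  classical
  set T : Ω → ℝ := fun ω ↦ ∑ j ∈ Finset.univ.erase i, c j * X j ω
  have hsplit : ∀ ω, ∑ j, c j * X j ω = c i * X i ω + T ω := fun ω ↦
    (Finset.add_sum_erase _ _ (Finset.mem_univ i)).symm
  have hT_mean : μ[T] = 0 :=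
    integral_sum_const_mul_eq_zero (fun j _ ↦ (hX_mom j).integrable) (fun j _ ↦ hX_mean j) c
  have hT_sq : ∫ ω, T ω ^ 2 ∂μ = ∑ j ∈ Finset.univ.erase i, c j ^ 2 :=
    integral_sq_sum_const_mul_of_pairwise_indepFun (fun j _ k _ hjk ↦ hX.indepFun hjk)
      (fun j _ ↦ mod_cast hX_mom j 2) (fun j _ ↦ hX_mean j) (fun j _ ↦ hX_sq j) c
  have hXT : IndepFun (X i) T μ := (hX.indepFun_sum_const_mul_of_notMem
    (fun j ↦ (hX_mom j).aestronglyMeasurable.aemeasurable) c (Finset.notMem_erase i _)).symm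
  have hT_mom : HasFiniteMoments T μ := .sum fun j _ ↦ (hX_mom j).const_mul (c j)
  simp_rw [hsplit]
  rw [hXT.integral_sq_mul_add_mul_sq (hX_mom i) hT_mom hT_mean, hX_sq i, hT_sq,
    Finset.sum_erase_eq_sub (Finset.mem_univ i)]
  ring

end ProbabilityTheory

theorem online_regression_gradient_second_moment_general
    {Ω : Type*} [MeasureSpace Ω] [IsProbabilityMeasure (ℙ : Measure Ω)]
    (n : ℕ) [NeZero n] (τ σ : ℝ)
    (a : Fin n → Ω → ℝ) (w : Ω → ℝ)
    (ha_indep : iIndepFun a ℙ)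
    (ha_ident : ∀ i, IdentDistrib (a i) (a 0) ℙ ℙ)
    (ha_mom : ∀ p : ℕ, MemLp (a 0) p ℙ)
    (ha_mean : ∫ ω, a 0 ω ∂ℙ = 0)
    (ha_var : ∫ ω, (a 0 ω) ^ 2 ∂ℙ = 1)
    (hw_indep : IndepFun (fun ω => fun i => a i ω) w ℙ)
    (hw_mom : ∀ p : ℕ, MemLp w p ℙ)
    (hw_mean : ∫ ω, w ω ∂ℙ = 0)
    (hw_var : ∫ ω, (w ω) ^ 2 ∂ℙ = σ ^ 2)
    (x ξ : Fin n → ℝ)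
    (g : Fin n → Ω → ℝ)
    (hg : ∀ i ω, g i ω =
      τ * (w ω - (Real.sqrt n)⁻¹ * ∑ j, a j ω * (x j - ξ j)) * ((Real.sqrt n)⁻¹ * a i ω)) :
    ∀ i, ∫ ω, (g i ω) ^ 2 ∂ℙ =
      τ ^ 2 / n * (σ ^ 2 + (n : ℝ)⁻¹ * ∑ j, (x j - ξ j) ^ 2)
        + τ ^ 2 * ((∫ ω, (a 0 ω) ^ 4 ∂ℙ) - 1) / n ^ 2 * (x i - ξ i) ^ 2 := by
  intro i
  set c : ℝ := (Real.sqrt n)⁻¹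
  set d : Fin n → ℝ := fun j ↦ x j - ξ j
  have ha_moments : ∀ j, HasFiniteMoments (a j) ℙ := fun j ↦ (ha_ident j).hasFiniteMoments ha_mom
  have ha_integral_pow : ∀ j (k : ℕ), ∫ ω, a j ω ^ k ∂ℙ = ∫ ω, a 0 ω ^ k ∂ℙ := fun j k ↦
    ((ha_ident j).comp (measurable_id.pow_const k)).integral_eq
  have hsignal := ha_indep.integral_sq_sum_const_mul_mul_sq ha_moments
    (fun j ↦ (ha_ident j).integral_eq.trans ha_mean)
    (fun j ↦ (ha_integral_pow j 2).trans ha_var) d i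
  have hnoise := hw_indep.integral_sq_sub_mul (φ := fun v ↦ c * ∑ j, d j * v j)
    (ψ := fun v ↦ v i ^ 2) (by fun_prop) (by fun_prop) hw_mom
    ((HasFiniteMoments.sum fun j _ ↦ (ha_moments j).const_mul (d j)).const_mul c)
    ((ha_moments i).pow 2) hw_mean
  have hc_sq : c ^ 2 = (n : ℝ)⁻¹ := by
    rw [inv_pow, Real.sq_sqrt (Nat.cast_nonneg n)]
  calc ∫ ω, g i ω ^ 2 ∂ℙ
      = τ ^ 2 * c ^ 2 * ∫ ω, (w ω - c * ∑ j, d j * a j ω) ^ 2 * a i ω ^ 2 ∂ℙ := by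
        rw [← integral_const_mul]
        congr with ω
        simp_rw [hg, d, mul_comm (a _ ω)]
        ring
    _ = _ := by
      beta_reduce at hnoise
      rw [hnoise, hw_var, ha_integral_pow, ha_var]
      simp_rw [mul_pow c, mul_assoc (c ^ 2)]
      rw [integral_const_mul, hsignal, ha_integral_pow, hc_sq]
      have hn : (n : ℝ) ≠ 0 := Nat.cast_ne_zero.mpr (NeZero.ne n)
      field_simp
      ring

/-- `E[(g^i)^2] = (τ^2/n)(σ^2 + e) + (τ^2 (E[(a^1)^4] − 1)/n^2) (x^i − ξ^i)^2`,
where `e = (1/n) Σ_j (x^j − ξ^j)^2` is the mean squared error of the current iterate. -/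
theorem online_regression_gradient_second_moment
    {Ω : Type*} [MeasureSpace Ω] [IsProbabilityMeasure (ℙ : Measure Ω)]
    (n : ℕ) [NeZero n] (τ σ : ℝ) (hτ : 0 < τ) (hσ : 0 ≤ σ)
    (a : Fin n → Ω → ℝ) (w : Ω → ℝ)
    (ha_meas : ∀ i, Measurable (a i)) (hw_meas : Measurable w)
    (ha_indep : iIndepFun a ℙ)
    (ha_ident : ∀ i, IdentDistrib (a i) (a 0) ℙ ℙ)
    (ha_mom : ∀ p : ℕ, MemLp (a 0) p ℙ)
    (ha_mean : ∫ ω, a 0 ω ∂ℙ = 0)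
    (ha_var : ∫ ω, (a 0 ω) ^ 2 ∂ℙ = 1)
    (hw_indep : IndepFun (fun ω => fun i => a i ω) w ℙ)
    (hw_mom : ∀ p : ℕ, MemLp w p ℙ)
    (hw_mean : ∫ ω, w ω ∂ℙ = 0)
    (hw_var : ∫ ω, (w ω) ^ 2 ∂ℙ = σ ^ 2)
    (x ξ : Fin n → ℝ)
    (g : Fin n → Ω → ℝ)
    (hg : ∀ i ω, g i ω =
      τ * (w ω - (Real.sqrt n)⁻¹ * ∑ j, a j ω * (x j - ξ j)) * ((Real.sqrt n)⁻¹ * a i ω)) :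
    ∀ i, ∫ ω, (g i ω) ^ 2 ∂ℙ =
      τ ^ 2 / n * (σ ^ 2 + (n : ℝ)⁻¹ * ∑ j, (x j - ξ j) ^ 2)
        + τ ^ 2 * ((∫ ω, (a 0 ω) ^ 4 ∂ℙ) - 1) / n ^ 2 * (x i - ξ i) ^ 2 :=
  online_regression_gradient_second_moment_general n τ σ a w ha_indep ha_ident ha_mom ha_mean ha_var
    hw_indep hw_mom hw_mean hw_var x ξ g hg
end

section
/- Let Δ^i = g^i − φ(X^i + g^i)/n be the coordinate increment of the online regularized regression update, G(x, ξ) = −τ(x − ξ) − φ(x) the drift function, and F = σ(X, Ξ). Then there exists a finite constant C, depending only on τ, σ, the moments of a^1, the Lipschitz constant of φ, and E[(Ξ^1)^2], such that for every i: E[ |E[Δ^i | F] − (1/n) G(X^i, Ξ^i)| ] ≤ C (1 + E[e])^{1/2} / n^{3/2}. -/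
/-!
Write `Z = (X, Ξ)` and `d = X − Ξ`. Since `(a, w)` is independent of `Z`, with
`E[a^j a^k] = δ_jk` and `E[w a^i] = 0`, pulling out the `Z`-measurable factors gives exactly
`E[g^i | Z] = −τ d^i / n`. Hence `E[Δ^i | Z] − G(X^i, Ξ^i) / n = −E[φ(X^i + g^i) − φ(X^i) | Z] / n`,
whose `L¹` norm is at most `(K / n) E|g^i|` because `φ` is `K`-Lipschitz. Finally, by
Cauchy–Schwarz, `E|g^i| ≤ (|τ| / √n) ‖w − ⟨a, d⟩ / √n‖₂ ‖a^i‖₂ ≤ (|τ| / √n) (2σ² + 2 E[e])^{1/2}`,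
using `E[⟨a, d⟩²] = Σ_j E[(d^j)²] = n E[e]`.
-/

open MeasureTheory ProbabilityTheory
open scoped ENNReal

section

variable {Ω : Type*} {mΩ : MeasurableSpace Ω} {μ : Measure Ω}

theorem integral_abs_mul_le_sqrt_mul_sqrt {f g : Ω → ℝ} (hf : MemLp f 2 μ) (hg : MemLp g 2 μ) :
    ∫ ω, |f ω * g ω| ∂μ ≤ √(∫ ω, f ω ^ 2 ∂μ) * √(∫ ω, g ω ^ 2 ∂μ) := by
  have two : ENNReal.ofReal 2 = 2 := by norm_num
  have h := integral_mul_le_Lp_mul_Lq_of_nonneg Real.HolderConjugate.two_two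
    (ae_of_all μ fun ω => abs_nonneg (f ω)) (ae_of_all μ fun ω => abs_nonneg (g ω))
    (two ▸ hf.abs) (two ▸ hg.abs)
  simpa only [abs_mul, Real.rpow_two, sq_abs, Real.sqrt_eq_rpow] using h

theorem memLp_two_mul_of_indepFun {f g : Ω → ℝ} (hfg : IndepFun f g μ) (hf : MemLp f 2 μ)
    (hg : MemLp g 2 μ) : MemLp (f * g) 2 μ := by
  refine (memLp_two_iff_integrable_sq (hf.1.mul hg.1)).2 ?_
  refine ((hfg.comp (φ := fun x : ℝ => x ^ 2) (ψ := fun x : ℝ => x ^ 2) (by fun_prop)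
    (by fun_prop)).integrable_mul hf.integrable_sq hg.integrable_sq).congr (ae_of_all μ fun ω => ?_)
  simp [mul_pow]

theorem memLp_two_of_integrable_sum_sq {ι : Type*} [Fintype ι] {f : ι → Ω → ℝ}
    (hf : ∀ j, AEStronglyMeasurable (f j) μ) (h : Integrable (fun ω => ∑ j, f j ω ^ 2) μ)
    (j : ι) : MemLp (f j) 2 μ := by
  refine (memLp_two_iff_integrable_sq (hf j)).2 (h.mono' ((hf j).pow 2) (ae_of_all μ fun ω => ?_))
  rw [Real.norm_eq_abs, abs_of_nonneg (sq_nonneg _)]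
  exact Finset.single_le_sum (f := fun k => f k ω ^ 2) (fun k _ => sq_nonneg _)
    (Finset.mem_univ j)

theorem memLp_two_of_lintegral_mul_sum_sq_ne_top {ι : Type*} [Fintype ι] {f : ι → Ω → ℝ}
    (hf : ∀ j, AEStronglyMeasurable (f j) μ) {c : ℝ} (hc : 0 < c)
    (h : ∫⁻ ω, ENNReal.ofReal (c * ∑ j, f j ω ^ 2) ∂μ ≠ ∞) (j : ι) : MemLp (f j) 2 μ := by
  have hsum : AEStronglyMeasurable (fun ω => ∑ j, f j ω ^ 2) μ :=
    Finset.aestronglyMeasurable_fun_sum _ fun j _ => (hf j).pow 2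
  have hint : Integrable (fun ω => c * ∑ j, f j ω ^ 2) μ :=
    ⟨hsum.const_mul c, (hasFiniteIntegral_iff_ofReal (ae_of_all μ fun ω => by positivity)).2
      h.lt_top⟩
  refine memLp_two_of_integrable_sum_sq hf ((hint.const_mul c⁻¹).congr (ae_of_all μ fun ω => ?_)) j
  simp [hc.ne']

theorem lintegral_ofReal_mul_sum_sq {ι : Type*} [Fintype ι] {f : ι → Ω → ℝ}
    (hf : ∀ j, MemLp (f j) 2 μ) {c : ℝ} (hc : 0 ≤ c) :
    ∫⁻ ω, ENNReal.ofReal (c * ∑ j, f j ω ^ 2) ∂μ = ENNReal.ofReal (c * ∑ j, ∫ ω, f j ω ^ 2 ∂μ) := by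
  rw [← integral_finsetSum _ fun j _ => (hf j).integrable_sq, ← integral_const_mul,
    ofReal_integral_eq_lintegral_ofReal
      ((integrable_finsetSum _ fun j _ => (hf j).integrable_sq).const_mul c)
      (ae_of_all μ fun ω => by positivity)]

theorem LipschitzWith.integrable_comp [IsFiniteMeasure μ] {K : NNReal} {φ : ℝ → ℝ}
    (hφ : LipschitzWith K φ) {f : Ω → ℝ} (hf : Integrable f μ) :
    Integrable (fun ω => φ (f ω)) μ := by
  refine ((integrable_const |φ 0|).add (hf.abs.const_mul K)).mono'
    (hφ.continuous.comp_aestronglyMeasurable hf.1) (ae_of_all μ fun ω => ?_)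
  have := hφ.dist_le_mul (f ω) 0
  rw [Real.dist_eq, Real.dist_eq, sub_zero] at this
  rw [Real.norm_eq_abs, Pi.add_apply]
  linarith [abs_sub_abs_le_abs_sub (φ (f ω)) (φ 0)]

theorem ProbabilityTheory.HasLaw.memLp {E : Type*} [NormedAddCommGroup E] [MeasurableSpace E]
    [BorelSpace E] {Y : Ω → E} {ν : Measure E} (hY : HasLaw Y ν μ) {p : ℝ≥0∞}
    (h : MemLp id p ν) : MemLp Y p μ :=
  (hY.identDistrib .id).memLp_iff.2 h

theorem integral_mul_eq_ite_of_iIndepFun [IsProbabilityMeasure μ] {ι : Type*} [DecidableEq ι]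
    {ν : Measure ℝ} {a : ι → Ω → ℝ} (hind : iIndepFun a μ) (hlaw : ∀ j, HasLaw (a j) ν μ)
    (hmean : ∫ t, t ∂ν = 0) (hvar : ∫ t, t ^ 2 ∂ν = 1) (j k : ι) :
    ∫ ω, a j ω * a k ω ∂μ = if j = k then 1 else 0 := by
  split_ifs with hjk
  · subst hjk
    rw [← hvar, ← (hlaw j).integral_comp (by fun_prop)]
    simp [sq]
  · rw [(hind.indepFun hjk).integral_fun_mul_eq_mul_integral
      (hlaw j).aemeasurable.aestronglyMeasurable (hlaw k).aemeasurable.aestronglyMeasurable,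
      (hlaw j).integral_eq, hmean, zero_mul]

theorem identDistrib_apply_of_exchangeable {ι α γ : Type*} [DecidableEq ι] [MeasurableSpace α]
    [MeasurableSpace γ] {X : Ω → ι → α} {Ξ : Ω → ι → γ} (hX : Measurable X) (hΞ : Measurable Ξ)
    (hperm : ∀ π : Equiv.Perm ι,
      μ.map (fun ω => (fun i => X ω (π i), fun i => Ξ ω (π i))) = μ.map (fun ω => (X ω, Ξ ω)))
    (j k : ι) : IdentDistrib (fun ω => Ξ ω j) (fun ω => Ξ ω k) μ μ := by
  refine ⟨by fun_prop, by fun_prop, ?_⟩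
  have h := congrArg (Measure.map fun q : (ι → α) × (ι → γ) => q.2 k) (hperm (Equiv.swap j k))
  rw [Measure.map_map (by fun_prop) (by fun_prop), Measure.map_map (by fun_prop) (by fun_prop)]
    at h
  simpa [Function.comp_def] using h

theorem condExp_comp_ae_eq_integral [IsFiniteMeasure μ] {β γ : Type*} [MeasurableSpace β]
    [MeasurableSpace γ] {Z : Ω → β} {V : Ω → γ} (hZ : Measurable Z) (hV : Measurable V)
    (hZV : IndepFun Z V μ) {k : γ → ℝ} (hk : Measurable k) :
    μ[k ∘ V | MeasurableSpace.comap Z inferInstance] =ᵐ[μ] fun _ => ∫ ω, k (V ω) ∂μ := by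
  have hm := hZ.comap_le
  have : IsFiniteMeasure (μ.trim hm) := isFiniteMeasure_trim hm
  exact condExp_indep_eq (hk.comp hV).comap_le hm (comap_measurable _).stronglyMeasurable
    ((IndepFun_iff_Indep _ _ _).mp (hZV.symm.comp hk measurable_id))

theorem condExp_comp_mul_comp_ae_eq [IsFiniteMeasure μ] {β γ : Type*}
    [MeasurableSpace β] [MeasurableSpace γ] {Z : Ω → β} {V : Ω → γ} (hZ : Measurable Z)
    (hV : Measurable V) (hZV : IndepFun Z V μ) {h : β → ℝ} {k : γ → ℝ} (hh : Measurable h)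
    (hk : Measurable k) (hhi : Integrable (h ∘ Z) μ) (hki : Integrable (k ∘ V) μ) :
    μ[(h ∘ Z) * (k ∘ V) | MeasurableSpace.comap Z inferInstance]
      =ᵐ[μ] (h ∘ Z) * fun _ => ∫ ω, k (V ω) ∂μ :=
  (condExp_mul_of_stronglyMeasurable_left (hh.comp (comap_measurable Z)).stronglyMeasurable
    ((hZV.comp hh hk).integrable_mul hhi hki) hki).trans
    ((Filter.EventuallyEq.refl _ _).mul (condExp_comp_ae_eq_integral hZ hV hZV hk))

theorem integral_abs_condExp_comp_add_sub_le [IsFiniteMeasure μ] {m : MeasurableSpace Ω}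
    (hm : m ≤ mΩ) {K : NNReal} {φ : ℝ → ℝ} (hφ : LipschitzWith K φ) {Y g : Ω → ℝ}
    (hY : StronglyMeasurable[m] Y) (hYi : Integrable Y μ) (hg : Integrable g μ) :
    ∫ ω, |μ[fun ω => φ (Y ω + g ω) | m] ω - φ (Y ω)| ∂μ ≤ K * ∫ ω, |g ω| ∂μ := by
  have : IsFiniteMeasure (μ.trim hm) := isFiniteMeasure_trim hm
  have hφY := hφ.integrable_comp hYi
  have hψ : Integrable (fun ω => φ (Y ω + g ω)) μ := hφ.integrable_comp (hYi.add hg)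
  have hcond : μ[fun ω => φ (Y ω + g ω) - φ (Y ω) | m]
      =ᵐ[μ] fun ω => μ[fun ω => φ (Y ω + g ω) | m] ω - φ (Y ω) := by
    filter_upwards [condExp_sub hψ hφY m] with ω h
    rwa [condExp_of_stronglyMeasurable hm (hφ.continuous.comp_stronglyMeasurable hY) hφY] at h
  calc ∫ ω, |μ[fun ω => φ (Y ω + g ω) | m] ω - φ (Y ω)| ∂μ
      = ∫ ω, |μ[fun ω => φ (Y ω + g ω) - φ (Y ω) | m] ω| ∂μ :=
        integral_congr_ae (hcond.fun_comp abs).symm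
    _ ≤ ∫ ω, |φ (Y ω + g ω) - φ (Y ω)| ∂μ := integral_abs_condExp_le _
    _ ≤ ∫ ω, K * |g ω| ∂μ := by
        refine integral_mono (hψ.sub hφY).abs (hg.abs.const_mul _) fun ω => ?_
        simpa [Real.dist_eq] using hφ.dist_le_mul (Y ω + g ω) (Y ω)
    _ = K * ∫ ω, |g ω| ∂μ := integral_const_mul _ _

theorem lintegral_abs_condExp_sub_div_sub_le [IsFiniteMeasure μ] {m : MeasurableSpace Ω}
    (hm : m ≤ mΩ) {K : NNReal} {φ : ℝ → ℝ} (hφ : LipschitzWith K φ) {Y g G : Ω → ℝ}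
    (hY : StronglyMeasurable[m] Y) (hYi : Integrable Y μ) (hg : Integrable g μ) {r : ℝ}
    (hr : 0 ≤ r) (hgG : μ[g | m] =ᵐ[μ] fun ω => r⁻¹ * G ω) :
    ∫⁻ ω, ENNReal.ofReal |μ[fun ω => g ω - φ (Y ω + g ω) / r | m] ω - r⁻¹ * (G ω - φ (Y ω))| ∂μ
      ≤ ENNReal.ofReal (r⁻¹ * (K * ∫ ω, |g ω| ∂μ)) := by
  have hψ : Integrable (fun ω => φ (Y ω + g ω)) μ := hφ.integrable_comp (hYi.add hg)
  have hsplit : (fun ω => g ω - φ (Y ω + g ω) / r) = g - r⁻¹ • fun ω => φ (Y ω + g ω) := by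
    ext ω
    simp [div_eq_inv_mul]
  have hcond : (fun ω => ENNReal.ofReal
        |μ[fun ω => g ω - φ (Y ω + g ω) / r | m] ω - r⁻¹ * (G ω - φ (Y ω))|)
      =ᵐ[μ] fun ω => ENNReal.ofReal (r⁻¹ * |μ[fun ω => φ (Y ω + g ω) | m] ω - φ (Y ω)|) := by
    rw [hsplit]
    filter_upwards [condExp_sub hg (hψ.smul r⁻¹) m, condExp_smul r⁻¹ (fun ω => φ (Y ω + g ω)) m,
      hgG] with ω h₁ h₂ h₃
    rw [h₁, Pi.sub_apply, h₂, Pi.smul_apply, smul_eq_mul, h₃,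
      show ∀ x y u : ℝ, r⁻¹ * u - r⁻¹ * x - r⁻¹ * (u - y) = -(r⁻¹ * (x - y)) by intros; ring,
      abs_neg, abs_mul, abs_of_nonneg (inv_nonneg.mpr hr)]
  have hint : Integrable (fun ω => r⁻¹ * |μ[fun ω => φ (Y ω + g ω) | m] ω - φ (Y ω)|) μ :=
    (integrable_condExp.sub (hφ.integrable_comp hYi)).abs.const_mul _
  rw [lintegral_congr_ae hcond,
    ← ofReal_integral_eq_lintegral_ofReal hint (ae_of_all μ fun ω => by positivity),
    integral_const_mul]
  gcongr
  exact integral_abs_condExp_comp_add_sub_le hm hφ hY hYi hg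

section Update

variable {β : Type*} [MeasurableSpace β] {n : ℕ} {Z : Ω → β}
  {A : Ω → Fin n → ℝ} {W : Ω → ℝ} {D : β → Fin n → ℝ}

theorem condExp_sum_mul_ae_eq [IsFiniteMeasure μ] (hZ : Measurable Z) (hA : Measurable A)
    (hZA : IndepFun Z A μ) (hA2 : ∀ j, MemLp (fun ω => A ω j) 2 μ)
    (hAA : ∀ j k, ∫ ω, A ω j * A ω k ∂μ = if j = k then 1 else 0) (hD : Measurable D)
    (hDi : ∀ j, Integrable (fun ω => D (Z ω) j) μ) (i : Fin n) :
    μ[fun ω => ∑ j, D (Z ω) j * (A ω j * A ω i) | MeasurableSpace.comap Z inferInstance]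
      =ᵐ[μ] fun ω => D (Z ω) i := by
  have hh : ∀ j, Measurable fun z => D z j := fun j => by fun_prop
  have hk : ∀ j, Measurable fun x : Fin n → ℝ => x j * x i := fun j => by fun_prop
  have hkint : ∀ j, Integrable ((fun x : Fin n → ℝ => x j * x i) ∘ A) μ := fun j =>
    (hA2 j).integrable_mul (hA2 i)
  have hsum : (fun ω => ∑ j, D (Z ω) j * (A ω j * A ω i))
      = ∑ j, (fun z => D z j) ∘ Z * (fun x : Fin n → ℝ => x j * x i) ∘ A := by
    ext ω
    simp
  have hterm := fun j => condExp_comp_mul_comp_ae_eq hZ hA hZA (hh j) (hk j) (hDi j) (hkint j)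
  rw [hsum]
  filter_upwards [condExp_finsetSum (s := Finset.univ) (fun j _ => (hZA.comp (hh j)
      (hk j)).integrable_mul (hDi j) (hkint j)) (MeasurableSpace.comap Z inferInstance),
    ae_all_iff.2 hterm] with ω h₁ h₂
  simp [h₁, h₂, hAA]

theorem condExp_update_ae_eq [IsFiniteMeasure μ] (hZ : Measurable Z) (hA : Measurable A)
    (hW : Measurable W) (hZAW : IndepFun Z (fun ω => (A ω, W ω)) μ)
    (hA2 : ∀ j, MemLp (fun ω => A ω j) 2 μ) (hW2 : MemLp W 2 μ)
    (hAA : ∀ j k, ∫ ω, A ω j * A ω k ∂μ = if j = k then 1 else 0) (hAW : IndepFun A W μ)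
    (hA0 : ∀ j, ∫ ω, A ω j ∂μ = 0) (hD : Measurable D)
    (hDi : ∀ j, Integrable (fun ω => D (Z ω) j) μ) {c s : ℝ} {i : Fin n} {g : Ω → ℝ}
    (hg : ∀ ω, g ω = c * (W ω - s * ∑ j, A ω j * D (Z ω) j) * (s * A ω i)) :
    μ[g | MeasurableSpace.comap Z inferInstance] =ᵐ[μ] fun ω => s ^ 2 * -(c * D (Z ω) i) := by
  have hWAi : Integrable (fun ω => W ω * A ω i) μ := hW2.integrable_mul (hA2 i)
  have hsum : Integrable (fun ω => ∑ j, D (Z ω) j * (A ω j * A ω i)) μ :=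
    integrable_finsetSum _ fun j _ => (hZAW.comp (φ := fun z => D z j)
      (ψ := fun v : (Fin n → ℝ) × ℝ => v.1 j * v.1 i) (by fun_prop) (by fun_prop)).integrable_mul
      (hDi j) ((hA2 j).integrable_mul (hA2 i))
  have hWA : ∫ ω, W ω * A ω i ∂μ = 0 := by
    have hindep : IndepFun W (fun ω => A ω i) μ :=
      (hAW.comp (φ := fun x : Fin n → ℝ => x i) (ψ := id) (by fun_prop) measurable_id).symm
    rw [hindep.integral_fun_mul_eq_mul_integral hW.aestronglyMeasurable (hA2 i).1, hA0, mul_zero]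
  have hnoise : μ[fun ω => W ω * A ω i | MeasurableSpace.comap Z inferInstance] =ᵐ[μ] 0 :=
    (condExp_comp_ae_eq_integral hZ (hA.prodMk hW) hZAW
      (k := fun v : (Fin n → ℝ) × ℝ => v.2 * v.1 i) (by fun_prop)).trans (by simp only [hWA]; rfl)
  have hsplit : g = (c * s) • (fun ω => W ω * A ω i)
      - (c * s ^ 2) • fun ω => ∑ j, D (Z ω) j * (A ω j * A ω i) := by
    ext ω
    have : ∑ j, D (Z ω) j * (A ω j * A ω i) = (∑ j, A ω j * D (Z ω) j) * A ω i := by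
      rw [Finset.sum_mul]
      exact Finset.sum_congr rfl fun _ _ => by ring
    simp only [hg, Pi.sub_apply, Pi.smul_apply, smul_eq_mul, this]
    ring
  rw [hsplit]
  filter_upwards [condExp_sub (hWAi.smul (c * s)) (hsum.smul (c * s ^ 2)) _,
    condExp_smul (m := MeasurableSpace.comap Z inferInstance) (c * s) (fun ω => W ω * A ω i),
    condExp_smul (m := MeasurableSpace.comap Z inferInstance) (c * s ^ 2)
      (fun ω => ∑ j, D (Z ω) j * (A ω j * A ω i)), hnoise,
    condExp_sum_mul_ae_eq hZ hA (hZAW.comp measurable_id measurable_fst) hA2 hAA hD hDi i]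
    with ω h₁ h₂ h₃ h₄ h₅
  rw [h₁, Pi.sub_apply, h₂, h₃, Pi.smul_apply, Pi.smul_apply, h₄, h₅, Pi.zero_apply, smul_eq_mul,
    smul_eq_mul]
  ring

theorem memLp_two_mul_comp_of_indepFun (hZA : IndepFun Z A μ)
    (hA2 : ∀ j, MemLp (fun ω => A ω j) 2 μ) (hD : Measurable D)
    (hD2 : ∀ j, MemLp (fun ω => D (Z ω) j) 2 μ) (j : Fin n) :
    MemLp (fun ω => A ω j * D (Z ω) j) 2 μ :=
  memLp_two_mul_of_indepFun
    (hZA.comp (φ := fun z => D z j) (ψ := fun x : Fin n → ℝ => x j) (by fun_prop)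
      (by fun_prop)).symm
    (hA2 j) (hD2 j)

theorem integral_sum_mul_sq_of_indepFun (hZA : IndepFun Z A μ)
    (hA2 : ∀ j, MemLp (fun ω => A ω j) 2 μ)
    (hAA : ∀ j k, ∫ ω, A ω j * A ω k ∂μ = if j = k then 1 else 0)
    (hD : Measurable D) (hD2 : ∀ j, MemLp (fun ω => D (Z ω) j) 2 μ) :
    ∫ ω, (∑ j, A ω j * D (Z ω) j) ^ 2 ∂μ = ∑ j, ∫ ω, D (Z ω) j ^ 2 ∂μ := by
  have hprod : ∀ j k, (fun ω => A ω j * D (Z ω) j * (A ω k * D (Z ω) k))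
      = fun ω => D (Z ω) j * D (Z ω) k * (A ω j * A ω k) := fun j k => by ext; ring
  have hint : ∀ j k, Integrable (fun ω => A ω j * D (Z ω) j * (A ω k * D (Z ω) k)) μ :=
    fun j k => (memLp_two_mul_comp_of_indepFun hZA hA2 hD hD2 j).integrable_mul
      (memLp_two_mul_comp_of_indepFun hZA hA2 hD hD2 k)
  have hterm : ∀ j k, ∫ ω, A ω j * D (Z ω) j * (A ω k * D (Z ω) k) ∂μ
      = if j = k then ∫ ω, D (Z ω) j ^ 2 ∂μ else 0 := fun j k => by
    have hindep : IndepFun (fun ω => D (Z ω) j * D (Z ω) k) (fun ω => A ω j * A ω k) μ :=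
      hZA.comp (φ := fun z => D z j * D z k) (ψ := fun x : Fin n → ℝ => x j * x k)
        (by fun_prop) (by fun_prop)
    rw [hprod, hindep.integral_fun_mul_eq_mul_integral
      ((hD2 j).integrable_mul (hD2 k)).1 ((hA2 j).integrable_mul (hA2 k)).1, hAA]
    split_ifs with hjk
    · simp [hjk, sq]
    · simp
  simp_rw [sq, Finset.sum_mul_sum]
  rw [integral_finsetSum _ fun j _ => integrable_finsetSum _ fun k _ => hint j k]
  simp_rw [integral_finsetSum _ fun k _ => hint _ k, hterm, sq]
  simp

theorem memLp_two_sub_mul_sum_mul (hZA : IndepFun Z A μ)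
    (hA2 : ∀ j, MemLp (fun ω => A ω j) 2 μ) (hW2 : MemLp W 2 μ) (hD : Measurable D)
    (hD2 : ∀ j, MemLp (fun ω => D (Z ω) j) 2 μ) (s : ℝ) :
    MemLp (fun ω => W ω - s * ∑ j, A ω j * D (Z ω) j) 2 μ :=
  hW2.sub ((memLp_finsetSum _ fun j _ =>
    memLp_two_mul_comp_of_indepFun hZA hA2 hD hD2 j).const_mul s)

theorem integral_abs_update_le (hZA : IndepFun Z A μ) (hA2 : ∀ j, MemLp (fun ω => A ω j) 2 μ)
    (hW2 : MemLp W 2 μ) (hAA : ∀ j k, ∫ ω, A ω j * A ω k ∂μ = if j = k then 1 else 0)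
    (hD : Measurable D) (hD2 : ∀ j, MemLp (fun ω => D (Z ω) j) 2 μ) (c s : ℝ) (i : Fin n) :
    ∫ ω, |c * (W ω - s * ∑ j, A ω j * D (Z ω) j) * (s * A ω i)| ∂μ
      ≤ |c| * |s| * √(2 * ∫ ω, W ω ^ 2 ∂μ + 2 * (s ^ 2 * ∑ j, ∫ ω, D (Z ω) j ^ 2 ∂μ)) := by
  set S := fun ω => ∑ j, A ω j * D (Z ω) j
  have hS2 : MemLp S 2 μ :=
    memLp_finsetSum _ fun j _ => memLp_two_mul_comp_of_indepFun hZA hA2 hD hD2 j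
  have hR2 : MemLp (fun ω => W ω - s * S ω) 2 μ :=
    memLp_two_sub_mul_sum_mul hZA hA2 hW2 hD hD2 s
  have hR : ∫ ω, (W ω - s * S ω) ^ 2 ∂μ
      ≤ 2 * ∫ ω, W ω ^ 2 ∂μ + 2 * (s ^ 2 * ∑ j, ∫ ω, D (Z ω) j ^ 2 ∂μ) := by
    rw [← integral_sum_mul_sq_of_indepFun hZA hA2 hAA hD hD2, ← integral_const_mul,
      ← integral_const_mul, ← integral_const_mul, ← integral_add (hW2.integrable_sq.const_mul 2)
        ((hS2.integrable_sq.const_mul _).const_mul 2)]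
    refine integral_mono hR2.integrable_sq ((hW2.integrable_sq.const_mul 2).add
      ((hS2.integrable_sq.const_mul _).const_mul 2)) fun ω => ?_
    nlinarith [sq_nonneg (W ω + s * S ω)]
  have hAi : ∫ ω, A ω i ^ 2 ∂μ = 1 := by simpa [sq] using hAA i i
  calc ∫ ω, |c * (W ω - s * S ω) * (s * A ω i)| ∂μ
      = |c| * |s| * ∫ ω, |(W ω - s * S ω) * A ω i| ∂μ := by
        rw [← integral_const_mul]
        congr 1 with ω
        simp only [abs_mul]
        ring
    _ ≤ |c| * |s| * (√(∫ ω, (W ω - s * S ω) ^ 2 ∂μ) * √(∫ ω, A ω i ^ 2 ∂μ)) := by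
        gcongr
        exact integral_abs_mul_le_sqrt_mul_sqrt hR2 (hA2 i)
    _ ≤ _ := by
        rw [hAi, Real.sqrt_one, mul_one]
        gcongr

theorem lintegral_abs_condExp_increment_sub_drift_le [IsFiniteMeasure μ] (hZ : Measurable Z)
    (hA : Measurable A) (hW : Measurable W) (hZAW : IndepFun Z (fun ω => (A ω, W ω)) μ)
    (hA2 : ∀ j, MemLp (fun ω => A ω j) 2 μ) (hW2 : MemLp W 2 μ)
    (hAA : ∀ j k, ∫ ω, A ω j * A ω k ∂μ = if j = k then 1 else 0) (hAW : IndepFun A W μ)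
    (hA0 : ∀ j, ∫ ω, A ω j ∂μ = 0) (hD : Measurable D)
    (hD2 : ∀ j, MemLp (fun ω => D (Z ω) j) 2 μ) {Y : β → ℝ} (hY : Measurable Y)
    (hYi : Integrable (fun ω => Y (Z ω)) μ) {K : NNReal} {φ : ℝ → ℝ} (hφ : LipschitzWith K φ)
    {c r : ℝ} (hr : 0 ≤ r) {i : Fin n} {g : Ω → ℝ}
    (hg : ∀ ω, g ω = c * (W ω - (√r)⁻¹ * ∑ j, A ω j * D (Z ω) j) * ((√r)⁻¹ * A ω i)) :
    ∫⁻ ω, ENNReal.ofReal |μ[fun ω => g ω - φ (Y (Z ω) + g ω) / r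
        | MeasurableSpace.comap Z inferInstance] ω - r⁻¹ * (-(c * D (Z ω) i) - φ (Y (Z ω)))| ∂μ
      ≤ ENNReal.ofReal (K * |c| * (√(2 * ∫ ω, W ω ^ 2 ∂μ
          + 2 * (r⁻¹ * ∑ j, ∫ ω, D (Z ω) j ^ 2 ∂μ)) / (r * √r))) := by
  have hs : ((√r)⁻¹) ^ 2 = r⁻¹ := by rw [inv_pow, Real.sq_sqrt hr]
  have hZA : IndepFun Z A μ := hZAW.comp measurable_id measurable_fst
  have hgG := condExp_update_ae_eq hZ hA hW hZAW hA2 hW2 hAA hAW hA0 hD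
    (fun j => (hD2 j).integrable one_le_two) hg
  rw [hs] at hgG
  have hgi : Integrable g μ := by
    rw [funext hg]
    exact ((memLp_two_sub_mul_sum_mul hZA hA2 hW2 hD hD2 _).const_mul c).integrable_mul
      ((hA2 i).const_mul _)
  refine (lintegral_abs_condExp_sub_div_sub_le hZ.comap_le hφ
    (hY.comp (comap_measurable Z)).stronglyMeasurable hYi hgi hr hgG).trans
    (ENNReal.ofReal_le_ofReal ?_)
  have hbound := integral_abs_update_le hZA hA2 hW2 hAA hD hD2 c (√r)⁻¹ i
  rw [hs, abs_of_nonneg (inv_nonneg.mpr (Real.sqrt_nonneg r))] at hbound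
  simp only [← hg] at hbound
  calc r⁻¹ * (K * ∫ ω, |g ω| ∂μ)
      ≤ r⁻¹ * (K * (|c| * (√r)⁻¹ * √(2 * ∫ ω, W ω ^ 2 ∂μ
          + 2 * (r⁻¹ * ∑ j, ∫ ω, D (Z ω) j ^ 2 ∂μ)))) := by gcongr
    _ = _ := by ring

end Update

end

theorem ofReal_mul_sqrt_div_le {k v E : ℝ} (hk : 0 ≤ k) (hv : 0 ≤ v) (hE : 0 ≤ E) {n : ℕ}
    (hn : 0 < n) :
    ENNReal.ofReal (k * (√(2 * v + 2 * E) / (n * √n)))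
      ≤ ENNReal.ofReal (k * √(2 * (1 + v))) * (1 + ENNReal.ofReal E) ^ ((1 : ℝ) / 2)
        / (n : ℝ≥0∞) ^ ((3 : ℝ) / 2) := by
  have hn' : (0 : ℝ) < n := Nat.cast_pos.mpr hn
  have hsqrt : ENNReal.ofReal √(1 + E) = (1 + ENNReal.ofReal E) ^ ((1 : ℝ) / 2) := by
    rw [Real.sqrt_eq_rpow, ← ENNReal.ofReal_rpow_of_nonneg (by positivity) (by norm_num),
      ENNReal.ofReal_add zero_le_one hE, ENNReal.ofReal_one]
  have hpow : ENNReal.ofReal (n * √n) = (n : ℝ≥0∞) ^ ((3 : ℝ) / 2) := by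
    rw [Real.sqrt_eq_rpow, ← Real.rpow_one_add' hn'.le (by norm_num),
      ← ENNReal.ofReal_rpow_of_nonneg hn'.le (by norm_num), ENNReal.ofReal_natCast]
    norm_num
  rw [← hsqrt, ← hpow, ← ENNReal.ofReal_mul (by positivity),
    ← ENNReal.ofReal_div_of_pos (by positivity)]
  gcongr
  rw [mul_assoc, ← Real.sqrt_mul (by positivity), mul_div_assoc]
  gcongr
  nlinarith

theorem online_regression_drift_approximation_general
    (τ σ : ℝ) (K : NNReal) (M₂ : ℝ)
    (ν νw : Measure ℝ)
    (hν_mom : ∀ p : ℕ, MemLp id p ν)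
    (hν_mean : ∫ t, t ∂ν = 0) (hν_var : ∫ t, t ^ 2 ∂ν = 1)
    (hνw_mom : ∀ p : ℕ, MemLp id p νw)
    (hνw_var : ∫ t, t ^ 2 ∂νw = σ ^ 2) :
    ∃ C : ℝ≥0∞, C ≠ ∞ ∧
      ∀ (n : ℕ) (hn : 0 < n)
        (Ω : Type) [MeasurableSpace Ω] (μ : Measure Ω) [IsProbabilityMeasure μ]
        (φ : ℝ → ℝ), LipschitzWith K φ →
      ∀ (a : Fin n → Ω → ℝ) (w : Ω → ℝ),
        (∀ i, Measurable (a i)) → Measurable w →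
        iIndepFun a μ →
        (∀ i, Measure.map (a i) μ = ν) →
        Measure.map w μ = νw →
        IndepFun (fun ω => fun i => a i ω) w μ →
      ∀ (X Ξ : Ω → Fin n → ℝ),
        Measurable X → Measurable Ξ →
        (∀ π : Equiv.Perm (Fin n),
          Measure.map (fun ω => (fun i => X ω (π i), fun i => Ξ ω (π i))) μ
            = Measure.map (fun ω => (X ω, Ξ ω)) μ) →
        IndepFun (fun ω => (X ω, Ξ ω)) (fun ω => (fun i => a i ω, w ω)) μ →
        MemLp (fun ω => Ξ ω ⟨0, hn⟩) 2 μ →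
        ∫ ω, (Ξ ω ⟨0, hn⟩) ^ 2 ∂μ ≤ M₂ →
      ∀ (g : Fin n → Ω → ℝ),
        (∀ i ω, g i ω =
          τ * (w ω - (Real.sqrt n)⁻¹ * ∑ j, a j ω * (X ω j - Ξ ω j))
            * ((Real.sqrt n)⁻¹ * a i ω)) →
      ∀ (Δ : Fin n → Ω → ℝ),
        (∀ i ω, Δ i ω = g i ω - φ (X ω i + g i ω) / n) →
      ∀ (e : Ω → ℝ),
        (∀ ω, e ω = (n : ℝ)⁻¹ * ∑ j, (X ω j - Ξ ω j) ^ 2) →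
      ∀ (F : MeasurableSpace Ω),
        F = MeasurableSpace.comap (fun ω => (X ω, Ξ ω)) inferInstance →
      ∀ i,
        ∫⁻ ω, ENNReal.ofReal
            |(μ[Δ i | F]) ω - (n : ℝ)⁻¹ * (-(τ * (X ω i - Ξ ω i)) - φ (X ω i))| ∂μ
          ≤ C * (1 + ∫⁻ ω, ENNReal.ofReal (e ω) ∂μ) ^ ((1 : ℝ) / 2)
              / (n : ℝ≥0∞) ^ ((3 : ℝ) / 2) := by
  refine ⟨ENNReal.ofReal (K * |τ| * √(2 * (1 + σ ^ 2))) + 1, by simp, ?_⟩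
  intro n hn Ω _ μ _ φ hφ a w ha hw ha_indep ha_law hw_law haw X Ξ hX hΞ hperm hXa hΞ2 _ g hg
    Δ hΔ e he F hF i
  obtain rfl : Δ = fun i ω => g i ω - φ (X ω i + g i ω) / n := funext₂ hΔ
  obtain rfl := funext he
  subst hF
  -- the `+ 1` keeps `C` positive, so that the bound is `∞` when `E[e] = ∞`
  rcases eq_or_ne (∫⁻ ω, ENNReal.ofReal ((n : ℝ)⁻¹ * ∑ j, (X ω j - Ξ ω j) ^ 2) ∂μ) ∞ with hE | hE
  · rw [hE, add_top, ENNReal.top_rpow_of_pos (by norm_num), ENNReal.mul_top (by simp),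
      ENNReal.top_div_of_ne_top (ENNReal.rpow_ne_top_of_nonneg (by norm_num) (by simp))]
    exact le_top
  have hd2 := memLp_two_of_lintegral_mul_sum_sq_ne_top (f := fun j ω => X ω j - Ξ ω j)
    (fun j => by fun_prop) (by positivity) hE
  have hlaw : ∀ j, HasLaw (a j) ν μ := fun j => ⟨(ha j).aemeasurable, ha_law j⟩
  have hwlaw : HasLaw w νw μ := ⟨hw.aemeasurable, hw_law⟩
  have hw_sq : ∫ ω, w ω ^ 2 ∂μ = σ ^ 2 := by
    rw [← hνw_var, ← hwlaw.integral_comp (by fun_prop)]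
    rfl
  have hΞi := (identDistrib_apply_of_exchangeable hX hΞ hperm i ⟨0, hn⟩).integrable_iff.2
    (hΞ2.integrable one_le_two)
  have key := lintegral_abs_condExp_increment_sub_drift_le (Z := fun ω => (X ω, Ξ ω))
    (A := fun ω j => a j ω) (D := fun z j => z.1 j - z.2 j) (Y := fun z => z.1 i)
    (by fun_prop) (by fun_prop) hw hXa (fun j => (hlaw j).memLp (by simpa using hν_mom 2))
    (hwlaw.memLp (by simpa using hνw_mom 2))
    (integral_mul_eq_ite_of_iIndepFun ha_indep hlaw hν_mean hν_var) haw
    (fun j => (hlaw j).integral_eq.trans hν_mean) (by fun_prop) hd2 (by fun_prop)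
    ((((hd2 i).integrable one_le_two).add hΞi).congr (ae_of_all μ fun ω => by simp)) hφ
    (Nat.cast_nonneg n) (hg i)
  rw [hw_sq] at key
  rw [lintegral_ofReal_mul_sum_sq hd2 (by positivity)]
  refine key.trans ((ofReal_mul_sqrt_div_le (by positivity) (sq_nonneg σ) (by positivity)
    hn).trans ?_)
  gcongr
  exact le_self_add

/-- Let `Δ^i = g^i − φ(X^i + g^i)/n` be the coordinate increment of the
online regularized regression update, `G(x, ξ) = −τ(x − ξ) − φ(x)` the drift function, and
`F = σ(X, Ξ)`.  Then there exists a finite constant `C`, depending only on `τ`, `σ`, the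
moments of `a^1` (i.e. on its law `ν`), the Lipschitz constant of `φ`, and `E[(Ξ^1)^2]`, such
that for every `i`:  `E[ |E[Δ^i | F] − (1/n) G(X^i, Ξ^i)| ] ≤ C (1 + E[e])^{1/2} / n^{3/2}`. -/
theorem online_regression_drift_approximation
    (τ σ : ℝ) (hτ : 0 < τ) (hσ : 0 ≤ σ) (K : NNReal) (M₂ : ℝ)
    (ν νw : Measure ℝ) [IsProbabilityMeasure ν] [IsProbabilityMeasure νw]
    (hν_mom : ∀ p : ℕ, MemLp id p ν)
    (hν_mean : ∫ t, t ∂ν = 0) (hν_var : ∫ t, t ^ 2 ∂ν = 1)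
    (hνw_mom : ∀ p : ℕ, MemLp id p νw)
    (hνw_mean : ∫ t, t ∂νw = 0) (hνw_var : ∫ t, t ^ 2 ∂νw = σ ^ 2) :
    ∃ C : ℝ≥0∞, C ≠ ∞ ∧
      ∀ (n : ℕ) (hn : 0 < n)
        (Ω : Type) [MeasurableSpace Ω] (μ : Measure Ω) [IsProbabilityMeasure μ]
        (φ : ℝ → ℝ), LipschitzWith K φ →
      ∀ (a : Fin n → Ω → ℝ) (w : Ω → ℝ),
        (∀ i, Measurable (a i)) → Measurable w →
        iIndepFun a μ →
        (∀ i, Measure.map (a i) μ = ν) →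
        Measure.map w μ = νw →
        IndepFun (fun ω => fun i => a i ω) w μ →
      ∀ (X Ξ : Ω → Fin n → ℝ),
        Measurable X → Measurable Ξ →
        (∀ π : Equiv.Perm (Fin n),
          Measure.map (fun ω => (fun i => X ω (π i), fun i => Ξ ω (π i))) μ
            = Measure.map (fun ω => (X ω, Ξ ω)) μ) →
        IndepFun (fun ω => (X ω, Ξ ω)) (fun ω => (fun i => a i ω, w ω)) μ →
        MemLp (fun ω => Ξ ω ⟨0, hn⟩) 2 μ →
        ∫ ω, (Ξ ω ⟨0, hn⟩) ^ 2 ∂μ ≤ M₂ →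
      ∀ (g : Fin n → Ω → ℝ),
        (∀ i ω, g i ω =
          τ * (w ω - (Real.sqrt n)⁻¹ * ∑ j, a j ω * (X ω j - Ξ ω j))
            * ((Real.sqrt n)⁻¹ * a i ω)) →
      ∀ (Δ : Fin n → Ω → ℝ),
        (∀ i ω, Δ i ω = g i ω - φ (X ω i + g i ω) / n) →
      ∀ (e : Ω → ℝ),
        (∀ ω, e ω = (n : ℝ)⁻¹ * ∑ j, (X ω j - Ξ ω j) ^ 2) →
      ∀ (F : MeasurableSpace Ω),
        F = MeasurableSpace.comap (fun ω => (X ω, Ξ ω)) inferInstance →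
      ∀ i,
        ∫⁻ ω, ENNReal.ofReal
            |(μ[Δ i | F]) ω - (n : ℝ)⁻¹ * (-(τ * (X ω i - Ξ ω i)) - φ (X ω i))| ∂μ
          ≤ C * (1 + ∫⁻ ω, ENNReal.ofReal (e ω) ∂μ) ^ ((1 : ℝ) / 2)
              / (n : ℝ≥0∞) ^ ((3 : ℝ) / 2) :=
  online_regression_drift_approximation_general τ σ K M₂ ν νw hν_mom hν_mean hν_var hνw_mom hνw_var
end
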